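/- arXiv:1104.2810 — 4 statements merged into one kernel-verified Lean document; each statement's English description precedes it below -/
import Mathlib

section
/- For any sequence of nonnegative weights (w_n)_{n≥1} with w_{n+1}/w_n → ∞, and for every ε > 0, there exists a constant C_ε < ∞ such that for all N ≥ 1 and n ≥ 0, Z(N,n) ≤ ε·Z(N,n+1) + C_ε^N, where Z(N,n) = Σ_{d_1+⋯+d_N = n} ∏_{i=1}^N w_{d_i+1}. -/
open Filter

set_option maxHeartbeats 1000000

/-- `Z w N n = Σ_{d_1+⋯+d_N = n} ∏_{i=1}^N w_{d_i+1}` (and `Z w 0 n = [n = 0]`). -/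
noncomputable def Z (w : ℕ → ℝ) (N n : ℕ) : ℝ :=
  ∑ d ∈ Finset.Nat.antidiagonalTuple N n, ∏ i, w (d i + 1)

/-- Lemma 1: for superexponential nonneg. weights, for every ε > 0 there is C_ε < ∞ with
`Z(N,n) ≤ ε·Z(N,n+1) + C_ε^N` for all N ≥ 1, n ≥ 0. -/
theorem stmt_0 (w : ℕ → ℝ) (hw : ∀ n, 1 ≤ n → 0 ≤ w n)
    (hratio : Tendsto (fun n => w (n + 1) / w n) atTop atTop) :
    ∀ ε : ℝ, 0 < ε → ∃ C : ℝ, ∀ N n : ℕ, 1 ≤ N →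
      Z w N n ≤ ε * Z w N (n + 1) + C ^ N := by
  intro ε hε
  classical
  have h1 : ∀ᶠ k in atTop, max 1 (1 / ε) ≤ w (k + 1) / w k :=
    hratio.eventually_ge_atTop _
  obtain ⟨m₀, hm₀⟩ := eventually_atTop.mp h1
  set m := max m₀ 1 with hmdef
  have hm1 : 1 ≤ m := le_max_right _ _
  have hkey : ∀ k, m ≤ k → w k ≤ ε * w (k + 1) := by
    intro k hk
    have hb := hm₀ k (le_trans (le_max_left _ _) hk)
    have hk1 : 1 ≤ k := le_trans hm1 hk
    have hwk : 0 < w k := by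
      rcases lt_or_eq_of_le (hw k hk1) with h | h
      · exact h
      · exfalso
        rw [← h, div_zero] at hb
        have := le_trans (le_max_left 1 (1 / ε)) hb
        linarith
    have h2 : 1 / ε ≤ w (k + 1) / w k := le_trans (le_max_right _ _) hb
    rw [div_le_div_iff₀ hε hwk] at h2
    linarith
  set C := ∑ k ∈ Finset.range m, w (k + 1) with hC
  refine ⟨C, ?_⟩
  intro N n hN
  have hNpos : 0 < N := hN
  have hterm : ∀ d : Fin N → ℕ, 0 ≤ ∏ i, w (d i + 1) := fun d =>
    Finset.prod_nonneg fun i _ => hw _ (Nat.le_add_left 1 _)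
  set A := Finset.Nat.antidiagonalTuple N n with hA
  set A' := Finset.Nat.antidiagonalTuple N (n + 1) with hA'
  set P : (Fin N → ℕ) → Prop := fun d => ∃ i, m ≤ d i with hP
  -- small part
  have hsmall : ∑ d ∈ A.filter (fun d => ¬ P d), ∏ i, w (d i + 1) ≤ C ^ N := by
    have hsub : A.filter (fun d => ¬ P d)
        ⊆ Fintype.piFinset (fun _ : Fin N => Finset.range m) := by
      intro d hd
      rw [Finset.mem_filter] at hd
      rw [Fintype.mem_piFinset]
      intro i
      rw [Finset.mem_range]
      by_contra h
      exact hd.2 ⟨i, le_of_not_gt h⟩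
    calc ∑ d ∈ A.filter (fun d => ¬ P d), ∏ i, w (d i + 1)
        ≤ ∑ d ∈ Fintype.piFinset (fun _ : Fin N => Finset.range m), ∏ i, w (d i + 1) :=
          Finset.sum_le_sum_of_subset_of_nonneg hsub (fun d _ _ => hterm d)
      _ = C ^ N := by rw [hC]; exact (Finset.sum_pow' (Finset.range m) (fun k => w (k + 1)) N).symm
  -- the shift map
  set idx : (Fin N → ℕ) → Fin N := fun d =>
    if h : (Finset.univ.filter fun i => m ≤ d i).Nonempty
    then (Finset.univ.filter fun i => m ≤ d i).min' h else ⟨0, hNpos⟩ with hidx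
  set φ : (Fin N → ℕ) → (Fin N → ℕ) :=
    fun d => Function.update d (idx d) (d (idx d) + 1) with hφ
  have hidx_spec : ∀ d, P d → m ≤ d (idx d) ∧ ∀ j, m ≤ d j → idx d ≤ j := by
    intro d hd
    obtain ⟨i, hi⟩ := hd
    have hne : (Finset.univ.filter fun j => m ≤ d j).Nonempty :=
      ⟨i, Finset.mem_filter.mpr ⟨Finset.mem_univ i, hi⟩⟩
    have he : idx d = (Finset.univ.filter fun j => m ≤ d j).min' hne := by
      simp only [hidx]
      rw [dif_pos hne]
    constructor
    · have h := Finset.min'_mem _ hne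
      rw [← he] at h
      exact (Finset.mem_filter.mp h).2
    · intro j hj
      rw [he]
      exact Finset.min'_le _ j (Finset.mem_filter.mpr ⟨Finset.mem_univ j, hj⟩)
  have hφmem : ∀ d ∈ A.filter P, φ d ∈ A' := by
    intro d hd
    have hdA := (Finset.mem_filter.mp hd).1
    have hsum : ∑ i, d i = n := by
      rw [hA, Finset.Nat.mem_antidiagonalTuple] at hdA
      exact hdA
    rw [hA', Finset.Nat.mem_antidiagonalTuple]
    have h1 : ∑ i, Function.update d (idx d) (d (idx d) + 1) i
        = d (idx d) + 1 + ∑ i ∈ Finset.univ \ {idx d}, d i :=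
      Finset.sum_update_of_mem (Finset.mem_univ (idx d)) d (d (idx d) + 1)
    have h2 : ∑ i, d i = d (idx d) + ∑ i ∈ Finset.univ \ {idx d}, d i := by
      rw [Finset.sdiff_singleton_eq_erase]
      exact (Finset.add_sum_erase _ _ (Finset.mem_univ _)).symm
    simp only [hφ]
    omega
  have hφle : ∀ d ∈ A.filter P, ∏ i, w (d i + 1) ≤ ε * ∏ i, w (φ d i + 1) := by
    intro d hd
    have hPd : P d := (Finset.mem_filter.mp hd).2
    obtain ⟨hge, -⟩ := hidx_spec d hPd
    have hR : 0 ≤ ∏ i ∈ Finset.univ.erase (idx d), w (d i + 1) :=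
      Finset.prod_nonneg fun i _ => hw _ (Nat.le_add_left 1 _)
    have e1 : ∏ i, w (d i + 1)
        = w (d (idx d) + 1) * ∏ i ∈ Finset.univ.erase (idx d), w (d i + 1) :=
      (Finset.mul_prod_erase Finset.univ _ (Finset.mem_univ (idx d))).symm
    have e2 : ∏ i, w (φ d i + 1)
        = w (d (idx d) + 1 + 1) * ∏ i ∈ Finset.univ.erase (idx d), w (d i + 1) := by
      rw [← Finset.mul_prod_erase Finset.univ (fun i => w (φ d i + 1))
        (Finset.mem_univ (idx d))]
      congr 1
      · simp [hφ]
      · apply Finset.prod_congr rfl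
        intro i hi
        have hne : i ≠ idx d := Finset.ne_of_mem_erase hi
        simp [hφ, Function.update_of_ne hne]
    rw [e1, e2]
    have hw1 : w (d (idx d) + 1) ≤ ε * w (d (idx d) + 1 + 1) :=
      hkey _ (le_trans hge (Nat.le_succ _))
    calc w (d (idx d) + 1) * ∏ i ∈ Finset.univ.erase (idx d), w (d i + 1)
        ≤ (ε * w (d (idx d) + 1 + 1)) * ∏ i ∈ Finset.univ.erase (idx d), w (d i + 1) :=
          mul_le_mul_of_nonneg_right hw1 hR
      _ = ε * (w (d (idx d) + 1 + 1) * ∏ i ∈ Finset.univ.erase (idx d), w (d i + 1)) := by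
          ring
  have hinj : ∀ d ∈ A.filter P, ∀ e ∈ A.filter P, φ d = φ e → d = e := by
    intro d hd e he heq
    have hPd := (Finset.mem_filter.mp hd).2
    have hPe := (Finset.mem_filter.mp he).2
    obtain ⟨hd1, hd2⟩ := hidx_spec d hPd
    obtain ⟨he1, he2⟩ := hidx_spec e hPe
    by_cases hij : idx d = idx e
    · funext k
      have hk := congrFun heq k
      simp only [hφ, Function.update_apply] at hk
      rw [← hij] at hk
      by_cases hk0 : k = idx d
      · simp only [if_pos hk0] at hk
        subst hk0
        omega
      · simp only [if_neg hk0] at hk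
        exact hk
    · exfalso
      have h1 := congrFun heq (idx d)
      have h2 := congrFun heq (idx e)
      simp only [hφ, Function.update_self, Function.update_of_ne hij,
        Function.update_of_ne (Ne.symm hij)] at h1 h2
      have ha : idx e ≤ idx d := he2 _ (by omega)
      have hb : idx d ≤ idx e := hd2 _ (by omega)
      exact hij (le_antisymm hb ha)
  have hbig : ∑ d ∈ A.filter P, ∏ i, w (d i + 1) ≤ ε * Z w N (n + 1) := by
    calc ∑ d ∈ A.filter P, ∏ i, w (d i + 1)
        ≤ ∑ d ∈ A.filter P, ε * ∏ i, w (φ d i + 1) := Finset.sum_le_sum hφle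
      _ = ε * ∑ d ∈ A.filter P, ∏ i, w (φ d i + 1) := by rw [Finset.mul_sum]
      _ = ε * ∑ e ∈ (A.filter P).image φ, ∏ i, w (e i + 1) := by
          rw [Finset.sum_image hinj]
      _ ≤ ε * Z w N (n + 1) := by
          apply mul_le_mul_of_nonneg_left _ hε.le
          rw [Z, ← hA']
          apply Finset.sum_le_sum_of_subset_of_nonneg
          · intro e he
            obtain ⟨d, hd, rfl⟩ := Finset.mem_image.mp he
            exact hφmem d hd
          · intro e _ _
            exact hterm e
  have hsplit : Z w N n = (∑ d ∈ A.filter P, ∏ i, w (d i + 1))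
      + ∑ d ∈ A.filter (fun d => ¬ P d), ∏ i, w (d i + 1) := by
    rw [Z, ← hA, ← Finset.sum_filter_add_sum_filter_not A P]
  rw [hsplit]
  exact add_le_add hbig hsmall
end

section
/- Let 0 < ε < 1 and 0 < α < 1. If (d_1,…,d_N) are nonnegative integers with Σ d_i = N−1 and d_i ≤ ε(N−1) for all i, then ∏_{i=1}^N (d_i!)^α ≤ (⌈ε(N−1)⌉!)^{α/ε}. -/
open Filter

lemma fact_pow_le_aux {d m : ℕ} (h : d ≤ m) :
    d.factorial ^ m ≤ m.factorial ^ d := by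
  induction m, h using Nat.le_induction with
  | base => rfl
  | succ m hm ih =>
    have h1 : d.factorial ≤ (m + 1) ^ d :=
      le_trans d.factorial_le_pow (Nat.pow_le_pow_left (by omega) d)
    calc d.factorial ^ (m + 1) = d.factorial ^ m * d.factorial := by ring
      _ ≤ m.factorial ^ d * (m + 1) ^ d := Nat.mul_le_mul ih h1
      _ = (m + 1).factorial ^ d := by
          rw [Nat.factorial_succ, Nat.mul_pow]; ring

/-- If `Σ d_i = N−1` and `d_i ≤ ε(N−1)` for all `i`, then
`∏ (d_i!)^α ≤ (⌈ε(N−1)⌉!)^{α/ε}`. -/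
theorem stmt_9 (ε α : ℝ) (hε0 : 0 < ε) (hε1 : ε < 1) (hα0 : 0 < α) (hα1 : α < 1)
    (N : ℕ) (hN : 1 ≤ N) (d : Fin N → ℕ) (hsum : ∑ i, d i = N - 1)
    (hbd : ∀ i, (d i : ℝ) ≤ ε * ((N : ℝ) - 1)) :
    ∏ i, ((d i).factorial : ℝ) ^ α ≤
      ((⌈ε * ((N : ℝ) - 1)⌉₊.factorial : ℝ)) ^ (α / ε) := by
  set m : ℕ := ⌈ε * ((N : ℝ) - 1)⌉₊ with hm
  set P : ℕ := ∏ i, (d i).factorial with hPdef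
  have hPfact : ∏ i, ((d i).factorial : ℝ) ^ α = (P : ℝ) ^ α := by
    rw [Real.finset_prod_rpow _ _ (fun i _ => by positivity) α, hPdef]
    push_cast; rfl
  have hm1 : (1 : ℝ) ≤ (m.factorial : ℝ) := by exact_mod_cast m.factorial_pos
  -- main claim
  have key : (P : ℝ) ≤ (m.factorial : ℝ) ^ (1 / ε) := by
    rcases eq_or_lt_of_le hN with h1 | h2
    · -- N = 1 : all d i = 0
      have hz : ∀ i, d i = 0 := by
        intro i
        have : ∑ j, d j = 0 := by rw [hsum, ← h1]
        exact (Finset.sum_eq_zero_iff.mp this) i (Finset.mem_univ i)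
      have : P = 1 := by
        rw [hPdef]; exact Finset.prod_eq_one fun i _ => by rw [hz i]; rfl
      rw [this, Nat.cast_one]
      exact Real.one_le_rpow hm1 (by positivity)
    · -- N ≥ 2
      have hN1 : (0 : ℝ) < (N : ℝ) - 1 := by
        have : (2 : ℝ) ≤ N := by exact_mod_cast h2
        linarith
      have hmpos : 0 < m := by
        rw [hm]
        exact Nat.ceil_pos.2 (by positivity)
      have hdm : ∀ i, d i ≤ m := by
        intro i
        exact Nat.cast_le.mp ((hbd i).trans (Nat.le_ceil _))
      have hPm : P ^ m ≤ m.factorial ^ (N - 1) := by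
        calc P ^ m = ∏ i, (d i).factorial ^ m := by rw [hPdef, Finset.prod_pow]
          _ ≤ ∏ i, m.factorial ^ (d i) :=
              Finset.prod_le_prod (fun i _ => Nat.zero_le _)
                (fun i _ => fact_pow_le_aux (hdm i))
          _ = m.factorial ^ (N - 1) := by
              rw [Finset.prod_pow_eq_pow_sum, hsum]
      have hPm' : (P : ℝ) ^ (m : ℝ) ≤ (m.factorial : ℝ) ^ ((N - 1 : ℕ) : ℝ) := by
        rw [Real.rpow_natCast, Real.rpow_natCast]
        exact_mod_cast hPm
      have hP1 : (0 : ℝ) ≤ (P : ℝ) := Nat.cast_nonneg _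
      have hmR : (0 : ℝ) < (m : ℝ) := by exact_mod_cast hmpos
      have step1 : (P : ℝ) ≤ (m.factorial : ℝ) ^ (((N - 1 : ℕ) : ℝ) / m) := by
        have := Real.rpow_le_rpow (by positivity) hPm' (le_of_lt (one_div_pos.2 hmR))
        rwa [← Real.rpow_mul hP1, mul_one_div, div_self (ne_of_gt hmR),
          Real.rpow_one, ← Real.rpow_mul (by positivity), mul_one_div] at this
      have hexp : ((N - 1 : ℕ) : ℝ) / m ≤ 1 / ε := by
        rw [div_le_div_iff₀ hmR hε0]
        have hle : ε * ((N : ℝ) - 1) ≤ m := Nat.le_ceil _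
        have hcast : ((N - 1 : ℕ) : ℝ) = (N : ℝ) - 1 := by
          push_cast [Nat.cast_sub hN]; ring
        rw [hcast]; linarith
      exact step1.trans (Real.rpow_le_rpow_of_exponent_le hm1 hexp)
  rw [hPfact]
  calc (P : ℝ) ^ α ≤ ((m.factorial : ℝ) ^ (1 / ε)) ^ α :=
        Real.rpow_le_rpow (Nat.cast_nonneg _) key (le_of_lt hα0)
    _ = (m.factorial : ℝ) ^ (α / ε) := by
        rw [← Real.rpow_mul (by positivity), one_div, inv_mul_eq_div]
end

section
/- Let D_1,…,D_k be positive integers, each at least d ≥ 1, and D = D_1 + ⋯ + D_k. Then D_1!⋯D_k! / D! ≤ (d!)^k / (kd)!. -/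
lemma choose_add_symm (a b : ℕ) : (a + b).choose a = (a + b).choose b := by
  have h := Nat.choose_symm (Nat.le_add_right a b)
  simpa using h.symm

lemma key_nat (d : ℕ) : ∀ (k : ℕ) (D : Fin k → ℕ), (∀ i, d ≤ D i) →
    (k * d).factorial * ∏ i, (D i).factorial
      ≤ d.factorial ^ k * (∑ i, D i).factorial := by
  intro k
  induction k with
  | zero => intro D _; simp
  | succ k ih =>
    intro D hD
    set g : Fin k → ℕ := fun i => D i.succ with hg
    have hgD : ∀ i, d ≤ g i := fun i => hD i.succ
    have IH := ih g hgD
    set S := ∑ i, g i with hS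
    have hSkd : k * d ≤ S := by
      have := Finset.card_nsmul_le_sum Finset.univ g d (fun i _ => hgD i)
      simpa [hS, mul_comm] using this
    have hD0 : d ≤ D 0 := hD 0
    -- binomial coefficient inequality
    have hch : (k * d + d).choose d ≤ (S + D 0).choose (D 0) := by
      calc (k * d + d).choose d ≤ (S + d).choose d :=
            Nat.choose_le_choose d (by omega)
        _ = (S + d).choose S := (choose_add_symm S d).symm
        _ ≤ (S + D 0).choose S := Nat.choose_le_choose S (by omega)
        _ = (S + D 0).choose (D 0) := choose_add_symm S (D 0)
    have e1 : ((k + 1) * d).factorial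
        = (k * d + d).choose d * (k * d).factorial * d.factorial := by
      rw [Nat.add_choose_mul_factorial_mul_factorial]
      ring_nf
    have e2 : (S + D 0).factorial
        = (S + D 0).choose (D 0) * S.factorial * (D 0).factorial := by
      rw [Nat.add_choose_mul_factorial_mul_factorial]
    rw [Fin.prod_univ_succ, Fin.sum_univ_succ]
    have hsum : (∑ i : Fin k, D i.succ) = S := rfl
    rw [hsum, e1]
    calc (k * d + d).choose d * (k * d).factorial * d.factorial *
          ((D 0).factorial * ∏ i, (g i).factorial)
        = (k * d + d).choose d * d.factorial * (D 0).factorial *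
            ((k * d).factorial * ∏ i, (g i).factorial) := by ring
      _ ≤ (k * d + d).choose d * d.factorial * (D 0).factorial *
            (d.factorial ^ k * S.factorial) := by
          exact Nat.mul_le_mul_left _ IH
      _ ≤ (S + D 0).choose (D 0) * d.factorial * (D 0).factorial *
            (d.factorial ^ k * S.factorial) := by
          gcongr
      _ = d.factorial ^ (k + 1) *
            ((S + D 0).choose (D 0) * S.factorial * (D 0).factorial) := by
          ring
      _ = d.factorial ^ (k + 1) * (D 0 + S).factorial := by
          rw [← e2, Nat.add_comm S (D 0)]

/-- If `D_1, …, D_k` are integers each at least `d ≥ 1`, then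
`D_1!⋯D_k!/(D_1+⋯+D_k)! ≤ (d!)^k/(kd)!`. -/
theorem stmt_11 (k d : ℕ) (hd : 1 ≤ d) (D : Fin k → ℕ) (hD : ∀ i, d ≤ D i) :
    (∏ i, ((D i).factorial : ℝ)) / ((∑ i, D i).factorial : ℝ)
      ≤ ((d.factorial : ℝ)) ^ k / ((k * d).factorial : ℝ) := by
  have h := key_nat d k D hD
  have h' : ((k * d).factorial * ∏ i, (D i).factorial : ℝ)
      ≤ (d.factorial : ℝ) ^ k * ((∑ i, D i).factorial : ℝ) := by
    exact_mod_cast h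
  rw [div_le_div_iff₀ (by positivity) (by positivity)]
  push_cast at h'
  nlinarith [h']
end

section
/- For simply generated trees with superexponential weights, if s_1 denotes the first child of s, then for every L ≥ 1 and k ≥ L, ν_N(L+1 ≤ σ(s_1) ≤ k+1 | σ(s) = k+1) ≤ 2/L for all N > 1. -/
open Filter

/-- Rooted planar trees (the tree hanging from the vertex `s` next to the root `r`;
the full tree of the paper with `N` edges corresponds to a `PTree` with `N` vertices,
plus the extra root `r` of degree 1 attached to the root `s` of the `PTree`). -/
inductive PTree : Type where
  | node : List PTree → PTree

namespace PTree

/-- The (ordered) subtrees attached to the root. -/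
def children : PTree → List PTree
  | node ts => ts

/-- Number of vertices of the `PTree`, i.e. the number `N` of edges of the paper's tree. -/
def size : PTree → ℕ
  | node ts => 1 + (ts.attach.map (fun t => size t.1)).sum
decreasing_by simp [PTree.node.sizeOf_spec]; have := List.sizeOf_lt_of_mem t.2; omega

/-- The weight `∏_{v ≠ r} w_{σ(v)}`: every vertex `v ≠ r` has degree `outdeg(v) + 1`. -/
noncomputable def weight (w : ℕ → ℝ) : PTree → ℝ
  | node ts => w (ts.length + 1) * (ts.attach.map (fun t => weight w t.1)).prod
decreasing_by simp [PTree.node.sizeOf_spec]; have := List.sizeOf_lt_of_mem t.2; omega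

/-- The number of vertices of outdegree `k`, i.e. the number `X_{k+1}` of vertices
(other than `r`) of degree `k+1`. -/
def countOutdeg (k : ℕ) : PTree → ℕ
  | node ts => (if ts.length = k then 1 else 0) + (ts.attach.map (fun t => countOutdeg k t.1)).sum
decreasing_by simp [PTree.node.sizeOf_spec]; have := List.sizeOf_lt_of_mem t.2; omega

/-- The maximal outdegree of a vertex of the tree. -/
def maxOutdeg : PTree → ℕ
  | node ts => max ts.length ((ts.attach.map (fun t => maxOutdeg t.1)).foldr max 0)
decreasing_by simp [PTree.node.sizeOf_spec]; have := List.sizeOf_lt_of_mem t.2; omega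

/-- Outdegree of the first (leftmost) child `s₁` of `s` (0 if there is none). -/
def firstChildOutdeg : PTree → ℕ
  | node [] => 0
  | node (t :: _) => t.children.length

end PTree

/-- The partition function `Z_N = Σ_{τ ∈ Γ_N} ∏_{v ∈ V(τ)∖{r}} w_{σ(v)}`. -/
noncomputable def Zfun (w : ℕ → ℝ) (N : ℕ) : ℝ :=
  ∑' t : {t : PTree // t.size = N}, t.1.weight w

/-- `ν_N(P)`: probability of the event `P` under the simply generated measure `ν_N`. -/
noncomputable def nu (w : ℕ → ℝ) (N : ℕ) (P : PTree → Prop) : ℝ :=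
  (∑' t : {t : PTree // t.size = N ∧ P t}, t.1.weight w) / Zfun w N

namespace SGT
open PTree

section Words
variable (w : ℕ → ℝ)


def Words (n m : ℕ) : Type := {u : Fin n → ℕ // (∑ i, u i) + m = n}

instance WordsFinite (n m : ℕ) : Finite (Words n m) := by
  have h : ∀ (u : Words n m) (i : Fin n), u.1 i ≤ n := by
    intro u i
    have h1 : u.1 i ≤ ∑ j, u.1 j :=
      Finset.single_le_sum (f := u.1) (fun _ _ => Nat.zero_le _) (Finset.mem_univ i)
    have := u.2; omega
  apply Finite.of_injective (β := Fin n → Fin (n+1)) (fun u i => ⟨u.1 i, Nat.lt_succ_of_le (h u i)⟩)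
  intro u v huv
  apply Subtype.ext; funext i
  have := congrFun huv i
  simpa [Fin.mk.injEq] using this

/-- Peel equivalence for words. -/
def wordsPeel (n m : ℕ) : Words (n+1) (m+1) ≃ Σ j : Fin (n+1), Words n (m + j) where
  toFun u := ⟨⟨u.1 0, by
      have h := u.2
      have h1 : ∑ i, u.1 i = u.1 0 + ∑ i : Fin n, u.1 i.succ := Fin.sum_univ_succ u.1
      omega⟩,
    ⟨fun i => u.1 i.succ, by
      show (∑ i : Fin n, u.1 i.succ) + (m + u.1 0) = n
      have h := u.2
      have h1 : ∑ i, u.1 i = u.1 0 + ∑ i : Fin n, u.1 i.succ := Fin.sum_univ_succ u.1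
      omega⟩⟩
  invFun p := ⟨Fin.cons p.1.1 p.2.1, by
      have h : ∑ i, (Fin.cons p.1.1 p.2.1 : Fin (n+1) → ℕ) i
          = p.1.1 + ∑ i : Fin n, p.2.1 i := by
        rw [Fin.sum_univ_succ]; simp
      rw [h]
      have h2 := p.2.2
      have h3 := p.1.2
      omega⟩
  left_inv u := by
    apply Subtype.ext
    funext i
    refine Fin.cases ?_ (fun j => ?_) i <;> simp
  right_inv p := by
    obtain ⟨⟨j, hj⟩, v, hv⟩ := p
    refine Sigma.ext (by simp) ?_
    refine heq_of_eq (Subtype.ext (funext fun i => ?_))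
    simp

/-- Generalized peel for sums over words weighted by a function of the first letter. -/
lemma tsum_words_peel (g : ℕ → ℝ) (n m : ℕ) :
    ∑' u : Words (n+1) (m+1), g (u.1 0) * ∏ i, w (u.1 i + 1)
      = ∑ j : Fin (n+1), g j.1 * w (j.1 + 1) * ∑' v : Words n (m + j.1), ∏ i, w (v.1 i + 1) := by
  rw [← Equiv.tsum_eq (wordsPeel n m).symm]
  have hs : Summable (fun p : (Σ j : Fin (n+1), Words n (m + j.1)) =>
      g (((wordsPeel n m).symm p).1 0) * ∏ i, w (((wordsPeel n m).symm p).1 i + 1)) := by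
    have : Finite (Σ j : Fin (n+1), Words n (m + j.1)) := by infer_instance
    exact Summable.of_finite
  rw [Summable.tsum_sigma hs]
  rw [tsum_fintype]
  apply Finset.sum_congr rfl
  intro j _
  rw [← tsum_mul_left]
  apply tsum_congr
  intro v
  have h0 : ((wordsPeel n m).symm ⟨j, v⟩).1 0 = j.1 := by
    show (Fin.cons j.1 v.1 : Fin (n+1) → ℕ) 0 = j.1; simp
  have hprod : ∏ i, w (((wordsPeel n m).symm ⟨j, v⟩).1 i + 1)
      = w (j.1 + 1) * ∏ i, w (v.1 i + 1) := by
    show ∏ i : Fin (n+1), w ((Fin.cons j.1 v.1 : Fin (n+1) → ℕ) i + 1) = _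
    rw [Fin.prod_univ_succ]; simp
  rw [h0, hprod]; ring

noncomputable def VW (n m : ℕ) : ℝ := ∑' u : Words n m, ∏ i, w (u.1 i + 1)

lemma Words_empty {n m : ℕ} (h : n < m) : IsEmpty (Words n m) :=
  ⟨fun u => by have := u.2; omega⟩

lemma VW_eq_zero {n m : ℕ} (h : n < m) : VW w n m = 0 := by
  have := Words_empty (n := n) (m := m) h
  rw [VW, tsum_empty]

def wordsPerm (n m : ℕ) (σ : Equiv.Perm (Fin n)) : Words n m ≃ Words n m where
  toFun u := ⟨u.1 ∘ σ, by
    have : ∑ i, (u.1 ∘ σ) i = ∑ i, u.1 i := Fintype.sum_equiv σ _ _ (fun i => rfl)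
    rw [this]; exact u.2⟩
  invFun u := ⟨u.1 ∘ σ.symm, by
    have : ∑ i, (u.1 ∘ σ.symm) i = ∑ i, u.1 i := Fintype.sum_equiv σ.symm _ _ (fun i => rfl)
    rw [this]; exact u.2⟩
  left_inv u := by apply Subtype.ext; funext i; simp
  right_inv u := by apply Subtype.ext; funext i; simp

lemma tsum_words_coord (n m : ℕ) (i₀ : Fin (n+1)) :
    ∑' u : Words (n+1) m, (u.1 i₀ : ℝ) * ∏ i, w (u.1 i + 1)
      = ∑' u : Words (n+1) m, (u.1 0 : ℝ) * ∏ i, w (u.1 i + 1) := by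
  rw [← Equiv.tsum_eq (wordsPerm (n+1) m (Equiv.swap 0 i₀))
    (fun u => (u.1 i₀ : ℝ) * ∏ i, w (u.1 i + 1))]
  apply tsum_congr
  intro u
  have h1 : (wordsPerm (n+1) m (Equiv.swap 0 i₀) u).1 i₀ = u.1 0 := by
    show u.1 (Equiv.swap 0 i₀ i₀) = u.1 0
    rw [Equiv.swap_apply_right]
  have h2 : ∏ i, w ((wordsPerm (n+1) m (Equiv.swap 0 i₀) u).1 i + 1)
      = ∏ i, w (u.1 i + 1) :=
    Fintype.prod_equiv (Equiv.swap 0 i₀) _ _ (fun i => rfl)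
  rw [h1, h2]

lemma words_sym (n m : ℕ) :
    ((n+1 : ℕ) : ℝ) * ∑' u : Words (n+1) m, (u.1 0 : ℝ) * ∏ i, w (u.1 i + 1)
      = (((n+1 : ℕ) : ℝ) - m) * VW w (n+1) m := by
  have h1 : ∀ i₀ : Fin (n+1),
      ∑' u : Words (n+1) m, (u.1 i₀ : ℝ) * ∏ i, w (u.1 i + 1)
        = ∑' u : Words (n+1) m, (u.1 0 : ℝ) * ∏ i, w (u.1 i + 1) :=
    tsum_words_coord w n m
  have h2 : ((n+1 : ℕ) : ℝ) * ∑' u : Words (n+1) m, (u.1 0 : ℝ) * ∏ i, w (u.1 i + 1)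
      = ∑ i₀ : Fin (n+1), ∑' u : Words (n+1) m, (u.1 i₀ : ℝ) * ∏ i, w (u.1 i + 1) := by
    rw [Finset.sum_congr rfl (fun i₀ _ => h1 i₀)]
    rw [Finset.sum_const, Finset.card_univ, Fintype.card_fin]
    simp [mul_comm]
  rw [h2, ← Summable.tsum_finsetSum (fun i₀ _ => Summable.of_finite)]
  rw [VW, ← tsum_mul_left]
  apply tsum_congr
  intro u
  have hc : ∑ i₀ : Fin (n+1), (u.1 i₀ : ℝ) = ((n+1 : ℕ) : ℝ) - m := by
    have h3 := u.2
    have : ((∑ i, u.1 i : ℕ) : ℝ) = ∑ i₀ : Fin (n+1), (u.1 i₀ : ℝ) := by push_cast; rfl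
    have h4 : ((∑ i, u.1 i : ℕ) : ℝ) + m = ((n+1 : ℕ) : ℝ) := by exact_mod_cast congrArg Nat.cast h3
    linarith [this ▸ h4]
  rw [← Finset.sum_mul, hc]

end Words


lemma size_node (ts : List PTree) : size (node ts) = 1 + (ts.map size).sum := by
  rw [size, List.attach_map_val]

lemma weight_node (w : ℕ → ℝ) (ts : List PTree) :
    weight w (node ts) = w (ts.length + 1) * (ts.map (weight w)).prod := by
  rw [weight, List.attach_map_val]

lemma node_children (t : PTree) : node t.children = t := by cases t; rfl

lemma size_pos (t : PTree) : 1 ≤ t.size := by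
  cases t with
  | node ts => rw [size_node]; omega

theorem weight_nonneg (w : ℕ → ℝ) (hw : ∀ n, 1 ≤ n → 0 ≤ w n) :
    ∀ t : PTree, 0 ≤ weight w t
  | .node ts => by
    rw [weight_node]
    apply mul_nonneg (hw _ (by omega))
    apply List.prod_nonneg
    intro x hx
    rw [List.mem_map] at hx
    obtain ⟨t', ht', rfl⟩ := hx
    exact weight_nonneg w hw t'
decreasing_by simp [PTree.node.sizeOf_spec]; have := List.sizeOf_lt_of_mem ht'; omega

def fsize (l : List PTree) : ℕ := (l.map size).sum
noncomputable def fweight (w : ℕ → ℝ) (l : List PTree) : ℝ := (l.map (weight w)).prod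

lemma fsize_cons (t : PTree) (l : List PTree) : fsize (t :: l) = t.size + fsize l := by
  simp [fsize]
lemma fsize_append (l₁ l₂ : List PTree) : fsize (l₁ ++ l₂) = fsize l₁ + fsize l₂ := by
  simp [fsize]
lemma fweight_cons (w : ℕ → ℝ) (t : PTree) (l : List PTree) :
    fweight w (t :: l) = t.weight w * fweight w l := by simp [fweight]
lemma fweight_append (w : ℕ → ℝ) (l₁ l₂ : List PTree) :
    fweight w (l₁ ++ l₂) = fweight w l₁ * fweight w l₂ := by simp [fweight]
lemma fweight_nonneg (w : ℕ → ℝ) (hw : ∀ n, 1 ≤ n → 0 ≤ w n) (l : List PTree) :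
    0 ≤ fweight w l := by
  apply List.prod_nonneg
  intro x hx
  rw [List.mem_map] at hx
  obtain ⟨t', _, rfl⟩ := hx
  exact weight_nonneg w hw t'

lemma length_le_fsize (l : List PTree) : l.length ≤ fsize l := by
  induction l with
  | nil => simp [fsize]
  | cons t l ih => rw [fsize_cons]; have := size_pos t; simp; omega

lemma size_child_le {ts : List PTree} {c : PTree} (hc : c ∈ ts) :
    c.size + 1 ≤ size (node ts) := by
  rw [size_node]
  have : c.size ≤ (ts.map size).sum :=
    List.single_le_sum (fun x _ => Nat.zero_le x) _ (List.mem_map_of_mem (f := size) hc)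
  omega

theorem ptree_finite : ∀ B : ℕ, Finite {t : PTree // t.size ≤ B} := by
  intro B
  induction B with
  | zero =>
    have : IsEmpty {t : PTree // t.size ≤ 0} := ⟨fun t => by have := size_pos t.1; omega⟩
    infer_instance
  | succ B ih =>
    have : Finite {l : List {t : PTree // t.size ≤ B} | l.length ≤ B}.Elem :=
      (List.finite_length_le _ B).to_subtype
    apply Finite.of_injective (β := {l : List {t : PTree // t.size ≤ B} | l.length ≤ B})
      (fun t => ⟨t.1.children.attach.map (fun c => ⟨c.1, by
        have h1 := size_child_le (ts := t.1.children) (c := c.1) c.2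
        rw [node_children] at h1
        have := t.2; omega⟩), by
        simp only [Set.mem_setOf_eq, List.length_map, List.length_attach]
        have h1 := length_le_fsize t.1.children
        have h2 : size (node t.1.children) = 1 + fsize t.1.children := size_node _
        rw [node_children] at h2
        have := t.2; omega⟩)
    intro t₁ t₂ h
    rw [Subtype.mk.injEq] at h
    have h2 := congrArg (List.map Subtype.val) h
    simp only [List.map_map, Function.comp_def, List.attach_map_val] at h2
    have h3 : (t₁.1).children = (t₂.1).children := by
      have e1 := List.attach_map_val (l := (t₁.1).children) (f := fun x => x)
      have e2 := List.attach_map_val (l := (t₂.1).children) (f := fun x => x)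
      simp only [List.map_id'] at e1 e2
      rw [e1, e2] at h2
      simpa using h2
    apply Subtype.ext
    rw [← node_children t₁.1, ← node_children t₂.1, h3]

def Forest (n m : ℕ) : Type := {l : List PTree // fsize l = n ∧ l.length = m}

instance forest_finite (n m : ℕ) : Finite (Forest n m) := by
  have hB : Finite {t : PTree // t.size ≤ n} := ptree_finite n
  have : Finite {l : List {t : PTree // t.size ≤ n} | l.length ≤ m}.Elem :=
    (List.finite_length_le _ m).to_subtype
  apply Finite.of_injective (β := {l : List {t : PTree // t.size ≤ n} | l.length ≤ m})
    (fun f => ⟨f.1.attach.map (fun c => ⟨c.1, by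
      have h1 : c.1.size ≤ fsize f.1 := by
        have : c.1.size ≤ (f.1.map size).sum :=
          List.single_le_sum (fun x _ => Nat.zero_le x) _ (List.mem_map_of_mem (f := size) c.2)
        exact this
      rw [f.2.1] at h1; exact h1⟩), by
      simp only [Set.mem_setOf_eq, List.length_map, List.length_attach]
      exact le_of_eq f.2.2⟩)
  intro f₁ f₂ h
  rw [Subtype.mk.injEq] at h
  have h2 := congrArg (List.map Subtype.val) h
  simp only [List.map_map, Function.comp_def] at h2
  have e1 := List.attach_map_val (l := f₁.1) (f := fun x => x)
  have e2 := List.attach_map_val (l := f₂.1) (f := fun x => x)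
  simp only [List.map_id'] at e1 e2
  rw [e1, e2] at h2
  exact Subtype.ext (by simpa using h2)

noncomputable def ZF (w : ℕ → ℝ) (n m : ℕ) : ℝ := ∑' f : Forest n m, fweight w f.1

lemma ZF_nonneg (w : ℕ → ℝ) (hw : ∀ n, 1 ≤ n → 0 ≤ w n) (n m : ℕ) : 0 ≤ ZF w n m :=
  tsum_nonneg (fun f => fweight_nonneg w hw f.1)

lemma forest_empty {n m : ℕ} (h : n < m) : IsEmpty (Forest n m) := by
  refine ⟨fun f => ?_⟩
  have h1 := length_le_fsize f.1
  rw [f.2.1, f.2.2] at h1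
  omega

lemma ZF_eq_zero (w : ℕ → ℝ) {n m : ℕ} (h : n < m) : ZF w n m = 0 := by
  have := forest_empty (n := n) (m := m) h
  rw [ZF, tsum_empty]

/-- The forest peel map. -/
def forestPeelFun (n m : ℕ) (p : Σ j : Fin (n+1), Forest n (m + j.1)) : Forest (n+1) (m+1) :=
  ⟨PTree.node (p.2.1.take p.1.1) :: p.2.1.drop p.1.1, by
    constructor
    · have htd : p.2.1.take p.1.1 ++ p.2.1.drop p.1.1 = p.2.1 := List.take_append_drop _ _
      have h1 : fsize (p.2.1.take p.1.1) + fsize (p.2.1.drop p.1.1) = n := by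
        rw [← fsize_append, htd, p.2.2.1]
      rw [fsize_cons, size_node]
      show 1 + fsize (p.2.1.take p.1.1) + fsize (p.2.1.drop p.1.1) = n + 1
      omega
    · have hlen : (p.2.1.drop p.1.1).length = m + p.1.1 - p.1.1 := by
        rw [List.length_drop, p.2.2.2]
      simp only [List.length_cons, hlen]
      omega⟩

lemma forestPeel_bijective (n m : ℕ) : Function.Bijective (forestPeelFun n m) := by
  constructor
  · rintro ⟨⟨j₁, hj₁⟩, f₁⟩ ⟨⟨j₂, hj₂⟩, f₂⟩ h
    have hval := congrArg Subtype.val h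
    simp only [forestPeelFun, List.cons.injEq, PTree.node.injEq] at hval
    replace h := hval
    have hl₁ : (f₁.1.take j₁).length = j₁ := by
      have h9 : f₁.1.length = m + j₁ := f₁.2.2
      rw [List.length_take]
      omega
    have hl₂ : (f₂.1.take j₂).length = j₂ := by
      have h9 : f₂.1.length = m + j₂ := f₂.2.2
      rw [List.length_take]
      omega
    have hj : j₁ = j₂ := by rw [← hl₁, ← hl₂, h.1]
    subst hj
    have hf : f₁.1 = f₂.1 := by
      rw [← List.take_append_drop j₁ f₁.1, ← List.take_append_drop j₁ f₂.1, h.1, h.2]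
    refine Sigma.ext rfl (heq_of_eq (Subtype.ext hf))
  · rintro ⟨l, hsz, hlen⟩
    match l, hlen with
    | t :: rest, hlen =>
      match t with
      | PTree.node us =>
        have hrest : rest.length = m := by simpa using hlen
        have hsz' : fsize (us ++ rest) = n := by
          rw [fsize_append]
          rw [fsize_cons, size_node] at hsz
          have h9 : (us.map size).sum = fsize us := rfl
          omega
        have hjle : us.length ≤ n := by
          have h1 := length_le_fsize us
          have h2 : fsize us ≤ n := by rw [← hsz', fsize_append]; omega
          omega
        refine ⟨⟨⟨us.length, Nat.lt_succ_of_le hjle⟩, ⟨us ++ rest, hsz', by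
          rw [List.length_append, hrest]
          show us.length + m = m + us.length
          omega⟩⟩, ?_⟩
        apply Subtype.ext
        simp only [forestPeelFun]
        rw [List.take_left' rfl, List.drop_left' rfl]

noncomputable def forestPeel (n m : ℕ) : (Σ j : Fin (n+1), Forest n (m + j.1)) ≃ Forest (n+1) (m+1) :=
  Equiv.ofBijective _ (forestPeel_bijective n m)

lemma ZF_peel (w : ℕ → ℝ) (n m : ℕ) :
    ZF w (n+1) (m+1) = ∑ j : Fin (n+1), w (j.1 + 1) * ZF w n (m + j.1) := by
  rw [ZF, ← Equiv.tsum_eq (forestPeel n m)]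
  rw [Summable.tsum_sigma (Summable.of_finite)]
  rw [tsum_fintype]
  apply Finset.sum_congr rfl
  intro j _
  rw [ZF, ← tsum_mul_left]
  apply tsum_congr
  intro f
  show fweight w (forestPeelFun n m ⟨j, f⟩).1 = w (j.1 + 1) * fweight w f.1
  show fweight w (PTree.node (f.1.take j.1) :: f.1.drop j.1) = _
  rw [fweight_cons, weight_node]
  have hlt : (f.1.take j.1).length = j.1 := by
    have h9 : f.1.length = m + j.1 := f.2.2
    rw [List.length_take]; omega
  rw [hlt]
  rw [mul_assoc, show ((f.1.take j.1).map (weight w)).prod = fweight w (f.1.take j.1) from rfl,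
    ← fweight_append, List.take_append_drop]

lemma ZF_zero_zero (w : ℕ → ℝ) : ZF w 0 0 = 1 := by
  rw [ZF]
  rw [tsum_eq_single (f := fun f : Forest 0 0 => fweight w f.1) (⟨[], by simp [fsize], by simp⟩ : Forest 0 0) ?_]
  · show fweight w [] = 1; simp [fweight]
  · rintro ⟨l, h1, h2⟩ hne
    exact absurd (Subtype.ext (List.length_eq_zero_iff.1 h2)) hne

lemma ZF_pos_zero (w : ℕ → ℝ) {n : ℕ} (hn : 0 < n) : ZF w n 0 = 0 := by
  have : IsEmpty (Forest n 0) := by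
    refine ⟨fun f => ?_⟩
    have h2 := f.2.2
    have h1 := f.2.1
    rw [List.length_eq_zero_iff.1 h2] at h1
    simp [fsize] at h1
    omega
  rw [ZF, tsum_empty]

lemma fsize_eq_zero {l : List PTree} (h : fsize l = 0) : l = [] := by
  have := length_le_fsize l
  rw [h] at this
  exact List.length_eq_zero_iff.1 (by omega)

lemma ZF_one_one (w : ℕ → ℝ) : ZF w 1 1 = w 1 := by
  rw [ZF]
  rw [tsum_eq_single (f := fun f : Forest 1 1 => fweight w f.1) (⟨[PTree.node []], by simp [fsize, size_node], by simp⟩ : Forest 1 1) ?_]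
  · show fweight w [PTree.node []] = w 1
    rw [fweight_cons, weight_node]
    simp [fweight]
  · rintro ⟨l, h1, h2⟩ hne
    exfalso
    apply hne
    match l, h2 with
    | [t], _ =>
      match t with
      | PTree.node ts =>
        have h3 : fsize [PTree.node ts] = 1 := h1
        rw [fsize_cons, size_node] at h3
        have h4 : (ts.map size).sum = fsize ts := rfl
        have h5 : fsize ts = 0 := by simp [fsize] at h3 ⊢; omega
        have h6 : ts = [] := fsize_eq_zero h5
        subst h6
        rfl

lemma VW_one_one (w : ℕ → ℝ) : VW w 1 1 = w 1 := by
  rw [VW]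
  rw [tsum_eq_single (f := fun u : Words 1 1 => ∏ i, w (u.1 i + 1)) (⟨fun _ => 0, by simp⟩ : Words 1 1) ?_]
  · simp
  · rintro ⟨u, hu⟩ hne
    exfalso
    apply hne
    apply Subtype.ext
    funext i
    have h1 : ∑ i : Fin 1, u i = u 0 := by simp
    have h2 : u 0 = 0 := by rw [h1] at hu; omega
    have hi : i = 0 := Subsingleton.elim _ _
    subst hi
    exact h2

lemma VW_peel (w : ℕ → ℝ) (n m : ℕ) :
    VW w (n+1) (m+1) = ∑ j : Fin (n+1), w (j.1 + 1) * VW w n (m + j.1) := by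
  have h := tsum_words_peel w (fun _ => (1:ℝ)) n m
  simp only [one_mul] at h
  rw [VW, h]
  apply Finset.sum_congr rfl
  intro j _
  rw [VW]

lemma key_words (w : ℕ → ℝ) (n m : ℕ) :
    ((n+1 : ℕ) : ℝ) * ∑ j : Fin (n+1), (j.1 : ℝ) * w (j.1 + 1) * VW w n (m + j.1)
      = (((n+1 : ℕ) : ℝ) - (m+1 : ℕ)) * VW w (n+1) (m+1) := by
  have h := tsum_words_peel w (fun x => (x : ℝ)) n m
  have h2 : (∑ j : Fin (n+1), (j.1 : ℝ) * w (j.1 + 1) * VW w n (m + j.1))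
      = ∑' u : Words (n+1) (m+1), ((u.1 0 : ℕ) : ℝ) * ∏ i, w (u.1 i + 1) := h.symm
  rw [h2]
  exact words_sym w n (m+1)

theorem core (w : ℕ → ℝ) : ∀ n m : ℕ, (n : ℝ) * ZF w n m = (m : ℝ) * VW w n m := by
  intro n
  induction n with
  | zero =>
    intro m
    rcases Nat.eq_zero_or_pos m with hm | hm
    · subst hm; simp
    · rw [VW_eq_zero w (by omega)]
      simp
  | succ n ih =>
    intro m
    rcases Nat.eq_zero_or_pos m with hm | hm
    · subst hm
      rw [ZF_pos_zero w (by omega)]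
      simp
    obtain ⟨m', rfl⟩ : ∃ m', m = m' + 1 := ⟨m - 1, by omega⟩
    rcases Nat.eq_zero_or_pos n with hn | hn
    · subst hn
      rcases Nat.eq_zero_or_pos m' with hm' | hm'
      · subst hm'
        rw [ZF_one_one, VW_one_one]
      · rw [ZF_eq_zero w (by omega), VW_eq_zero w (by omega)]
        simp
    -- main case : n ≥ 1
    have hcancel : ((n : ℝ)) ≠ 0 := by positivity
    apply mul_left_cancel₀ hcancel
    rw [show ((n:ℝ) * (((n+1 : ℕ):ℝ) * ZF w (n+1) (m'+1))) = ((n+1 : ℕ):ℝ) * ((n:ℝ) * ZF w (n+1) (m'+1)) by ring]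
    rw [ZF_peel w n m']
    rw [Finset.mul_sum]
    have hterm : ∀ j : Fin (n+1), (n:ℝ) * (w (j.1+1) * ZF w n (m' + j.1))
        = (m' + j.1 : ℕ) * (w (j.1+1) * VW w n (m' + j.1)) := by
      intro j
      have := ih (m' + j.1)
      calc (n:ℝ) * (w (j.1+1) * ZF w n (m' + j.1)) = w (j.1+1) * ((n:ℝ) * ZF w n (m' + j.1)) := by ring
      _ = w (j.1+1) * ((m' + j.1 : ℕ) * VW w n (m' + j.1)) := by rw [this]
      _ = _ := by ring
    rw [Finset.sum_congr rfl (fun j _ => hterm j)]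
    have hsplit : ∀ j : Fin (n+1), ((m' + j.1 : ℕ) : ℝ) * (w (j.1+1) * VW w n (m' + j.1))
        = (m' : ℝ) * (w (j.1+1) * VW w n (m' + j.1)) + (j.1 : ℝ) * w (j.1+1) * VW w n (m' + j.1) := by
      intro j; push_cast; ring
    rw [Finset.sum_congr rfl (fun j _ => hsplit j), Finset.sum_add_distrib]
    rw [← Finset.mul_sum]
    have hp := VW_peel w n m'
    rw [← hp]
    have hk := key_words w n m'
    push_cast at hk ⊢
    linear_combination hk


def eventBEquiv (n k : ℕ) :
    {t : PTree // t.size = n+1 ∧ t.children.length = k} ≃ Forest n k where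
  toFun t := ⟨t.1.children, by
    constructor
    · have h1 : size (PTree.node t.1.children) = 1 + fsize t.1.children := size_node _
      rw [node_children] at h1
      have h2 := t.2.1
      have : 1 + fsize t.1.children = n + 1 := by rw [← h1, h2]
      omega
    · exact t.2.2⟩
  invFun f := ⟨PTree.node f.1, by
    constructor
    · rw [size_node]
      have : (f.1.map size).sum = fsize f.1 := rfl
      rw [this, f.2.1]
      omega
    · show f.1.length = k
      exact f.2.2⟩
  left_inv t := Subtype.ext (node_children t.1)
  right_inv f := Subtype.ext rfl

lemma tsum_eventB (w : ℕ → ℝ) (n k : ℕ) :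
    ∑' t : {t : PTree // t.size = n+1 ∧ t.children.length = k}, t.1.weight w
      = w (k+1) * ZF w n k := by
  rw [← Equiv.tsum_eq (eventBEquiv n k).symm (fun t => t.1.weight w)]
  rw [ZF, ← tsum_mul_left]
  apply tsum_congr
  intro f
  show weight w (PTree.node f.1) = w (k+1) * fweight w f.1
  rw [weight_node, f.2.2]
  rfl


variable {n k' L : ℕ}

/-- index type for the first-child outdegree -/
abbrev Sidx (k' L : ℕ) := {ℓ : Fin (k'+2) // L ≤ ℓ.1}

def eventAFun (n k' L : ℕ) (p : Σ ℓ : Sidx k' L, Forest n (k' + ℓ.1.1)) :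
    {t : PTree // t.size = n+2 ∧ (t.children.length = k'+1 ∧
      L + 1 ≤ t.firstChildOutdeg + 1 ∧ t.firstChildOutdeg + 1 ≤ (k'+1) + 1)} := by
  refine ⟨PTree.node (PTree.node (p.2.1.take p.1.1.1) :: p.2.1.drop p.1.1.1), ?_, ?_, ?_, ?_⟩
  · rw [size_node]
    have h1 : ((PTree.node (p.2.1.take p.1.1.1) :: p.2.1.drop p.1.1.1).map size).sum
        = fsize (PTree.node (p.2.1.take p.1.1.1) :: p.2.1.drop p.1.1.1) := rfl
    rw [h1, fsize_cons, size_node]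
    have h2 : ((p.2.1.take p.1.1.1).map size).sum = fsize (p.2.1.take p.1.1.1) := rfl
    rw [h2]
    have h3 : fsize (p.2.1.take p.1.1.1) + fsize (p.2.1.drop p.1.1.1) = n := by
      rw [← fsize_append, List.take_append_drop, p.2.2.1]
    omega
  · show (PTree.node (p.2.1.take p.1.1.1) :: p.2.1.drop p.1.1.1).length = k' + 1
    have h4 : p.2.1.length = k' + p.1.1.1 := p.2.2.2
    simp only [List.length_cons, List.length_drop, h4]
    omega
  · show L + 1 ≤ (PTree.node (p.2.1.take p.1.1.1)).children.length + 1
    show L + 1 ≤ (p.2.1.take p.1.1.1).length + 1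
    have h4 : p.2.1.length = k' + p.1.1.1 := p.2.2.2
    rw [List.length_take]
    have := p.1.2
    omega
  · show (PTree.node (p.2.1.take p.1.1.1)).children.length + 1 ≤ (k' + 1) + 1
    show (p.2.1.take p.1.1.1).length + 1 ≤ (k' + 1) + 1
    rw [List.length_take]
    have := p.1.1.2
    omega

lemma eventA_bijective (n k' L : ℕ) : Function.Bijective (eventAFun n k' L) := by
  constructor
  · rintro ⟨⟨⟨ℓ₁, hℓ₁⟩, hL₁⟩, f₁⟩ ⟨⟨⟨ℓ₂, hℓ₂⟩, hL₂⟩, f₂⟩ h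
    have hval := congrArg Subtype.val h
    simp only [eventAFun, PTree.node.injEq, List.cons.injEq] at hval
    have hl₁ : (f₁.1.take ℓ₁).length = ℓ₁ := by
      have h9 : f₁.1.length = k' + ℓ₁ := f₁.2.2
      rw [List.length_take]; omega
    have hl₂ : (f₂.1.take ℓ₂).length = ℓ₂ := by
      have h9 : f₂.1.length = k' + ℓ₂ := f₂.2.2
      rw [List.length_take]; omega
    have hj : ℓ₁ = ℓ₂ := by rw [← hl₁, ← hl₂, hval.1]
    subst hj
    have hf : f₁.1 = f₂.1 := by
      rw [← List.take_append_drop ℓ₁ f₁.1, ← List.take_append_drop ℓ₁ f₂.1, hval.1, hval.2]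
    refine Sigma.ext rfl (heq_of_eq (Subtype.ext hf))
  · rintro ⟨t, hsz, hlen, hfc1, hfc2⟩
    match t with
    | PTree.node l =>
      have hlen' : l.length = k' + 1 := hlen
      match l, hlen' with
      | c :: rest, hlen' =>
        match c with
        | PTree.node us =>
          have hrest : rest.length = k' := by simpa using hlen'
          have hfco : (PTree.node (PTree.node us :: rest)).firstChildOutdeg = us.length := rfl
          rw [hfco] at hfc1 hfc2
          have hszl : fsize (us ++ rest) = n := by
            rw [size_node] at hsz
            have h1 : ((PTree.node us :: rest).map size).sum = fsize (PTree.node us :: rest) := rfl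
            rw [h1, fsize_cons, size_node] at hsz
            have h2 : (us.map size).sum = fsize us := rfl
            rw [h2] at hsz
            rw [fsize_append]
            omega
          refine ⟨⟨⟨⟨us.length, by omega⟩, by simpa using hfc1⟩,
            ⟨us ++ rest, hszl, by show (us ++ rest).length = k' + us.length; rw [List.length_append, hrest]; omega⟩⟩, ?_⟩
          apply Subtype.ext
          show PTree.node (PTree.node ((us ++ rest).take us.length) :: (us ++ rest).drop us.length) = _
          rw [List.take_left' rfl, List.drop_left' rfl]

noncomputable def eventAEquiv (n k' L : ℕ) :
    (Σ ℓ : Sidx k' L, Forest n (k' + ℓ.1.1)) ≃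
    {t : PTree // t.size = n+2 ∧ (t.children.length = k'+1 ∧
      L + 1 ≤ t.firstChildOutdeg + 1 ∧ t.firstChildOutdeg + 1 ≤ (k'+1) + 1)} :=
  Equiv.ofBijective _ (eventA_bijective n k' L)

lemma tsum_eventA (w : ℕ → ℝ) (n k' L : ℕ) :
    ∑' t : {t : PTree // t.size = n+2 ∧ (t.children.length = k'+1 ∧
      L + 1 ≤ t.firstChildOutdeg + 1 ∧ t.firstChildOutdeg + 1 ≤ (k'+1) + 1)}, t.1.weight w
      = w ((k'+1)+1) * ∑ ℓ : Sidx k' L, w (ℓ.1.1 + 1) * ZF w n (k' + ℓ.1.1) := by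
  rw [← Equiv.tsum_eq (eventAEquiv n k' L) (fun t => t.1.weight w)]
  rw [Summable.tsum_sigma (Summable.of_finite), tsum_fintype, Finset.mul_sum]
  apply Finset.sum_congr rfl
  intro ℓ _
  rw [ZF, ← tsum_mul_left, ← tsum_mul_left]
  apply tsum_congr
  intro f
  show weight w (PTree.node (PTree.node (f.1.take ℓ.1.1) :: f.1.drop ℓ.1.1)) = _
  rw [weight_node]
  have hlen : (PTree.node (f.1.take ℓ.1.1) :: f.1.drop ℓ.1.1).length = k' + 1 := by
    have h9 : f.1.length = k' + ℓ.1.1 := f.2.2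
    simp only [List.length_cons, List.length_drop, h9]
    omega
  rw [hlen]
  have hmap : ((PTree.node (f.1.take ℓ.1.1) :: f.1.drop ℓ.1.1).map (weight w)).prod
      = weight w (PTree.node (f.1.take ℓ.1.1)) * fweight w (f.1.drop ℓ.1.1) := by
    simp [fweight]
  rw [hmap, weight_node]
  have hlt : (f.1.take ℓ.1.1).length = ℓ.1.1 := by
    have h9 : f.1.length = k' + ℓ.1.1 := f.2.2
    rw [List.length_take]; omega
  rw [hlt]
  rw [show ((f.1.take ℓ.1.1).map (weight w)).prod = fweight w (f.1.take ℓ.1.1) from rfl]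
  rw [mul_assoc, ← fweight_append, List.take_append_drop]


lemma VW_nonneg (w : ℕ → ℝ) (hw : ∀ n, 1 ≤ n → 0 ≤ w n) (n m : ℕ) : 0 ≤ VW w n m :=
  tsum_nonneg (fun u => Finset.prod_nonneg (fun i _ => hw _ (by omega)))

lemma main_ineq (w : ℕ → ℝ) (hw : ∀ n, 1 ≤ n → 0 ≤ w n) (n k' L : ℕ)
    (hL : 1 ≤ L) (hk : L ≤ k' + 1) :
    ∑ ℓ : Sidx k' L, w (ℓ.1.1 + 1) * ZF w n (k' + ℓ.1.1)
      ≤ (2 / L) * ZF w (n+1) (k'+1) := by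
  have hL0 : (0:ℝ) < L := by exact_mod_cast hL
  have hBnn : 0 ≤ ZF w (n+1) (k'+1) := ZF_nonneg w hw _ _
  rcases Nat.eq_zero_or_pos n with hn | hn
  · subst hn
    have hzero : ∀ ℓ : Sidx k' L, w (ℓ.1.1 + 1) * ZF w 0 (k' + ℓ.1.1) = 0 := by
      intro ℓ
      have h1 : 0 < k' + ℓ.1.1 := by have := ℓ.2; omega
      rw [ZF_eq_zero w h1, mul_zero]
    rw [Finset.sum_congr rfl (fun ℓ _ => hzero ℓ), Finset.sum_const, smul_zero]
    positivity
  -- main case n ≥ 1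
  set A := ∑ ℓ : Sidx k' L, w (ℓ.1.1 + 1) * ZF w n (k' + ℓ.1.1) with hA
  set B := ZF w (n+1) (k'+1) with hB
  set V := VW w (n+1) (k'+1) with hV
  set g : ℕ → ℝ := fun j => (j:ℝ) * w (j+1) * VW w n (k' + j) with hg
  have hgnn : ∀ j, 0 ≤ g j := fun j =>
    mul_nonneg (mul_nonneg (by positivity) (hw _ (by omega))) (VW_nonneg w hw _ _)
  set G' := ∑ ℓ : Sidx k' L, g ℓ.1.1 with hG'
  set G := ∑ j : Fin (n+1), g j.1 with hG
  -- Step 1 : L * (n * A) ≤ 2 * (k'+1) * G'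
  have h1 : (L:ℝ) * ((n:ℝ) * A) ≤ 2 * ((k':ℝ)+1) * G' := by
    rw [hA, hG', Finset.mul_sum, Finset.mul_sum, Finset.mul_sum]
    apply Finset.sum_le_sum
    intro ℓ _
    have hcore := core w n (k' + ℓ.1.1)
    have hnat : L * (k' + ℓ.1.1) ≤ 2 * (k'+1) * ℓ.1.1 := by
      have hLl := ℓ.2
      have hl2 : ℓ.1.1 ≤ k' + 1 := by omega
      nlinarith [ℓ.2, hk]
    have hVnn := VW_nonneg w hw n (k' + ℓ.1.1)
    have hwnn := hw (ℓ.1.1 + 1) (by omega)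
    calc (L:ℝ) * ((n:ℝ) * (w (ℓ.1.1 + 1) * ZF w n (k' + ℓ.1.1)))
        = (L:ℝ) * (w (ℓ.1.1 + 1) * ((n:ℝ) * ZF w n (k' + ℓ.1.1))) := by ring
      _ = (L:ℝ) * (w (ℓ.1.1 + 1) * (((k' + ℓ.1.1 : ℕ):ℝ) * VW w n (k' + ℓ.1.1))) := by rw [hcore]
      _ = ((L * (k' + ℓ.1.1) : ℕ):ℝ) * (w (ℓ.1.1 + 1) * VW w n (k' + ℓ.1.1)) := by push_cast; ring
      _ ≤ ((2 * (k'+1) * ℓ.1.1 : ℕ):ℝ) * (w (ℓ.1.1 + 1) * VW w n (k' + ℓ.1.1)) := by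
          apply mul_le_mul_of_nonneg_right _ (mul_nonneg hwnn hVnn)
          exact_mod_cast hnat
      _ = 2 * ((k':ℝ)+1) * g ℓ.1.1 := by rw [hg]; push_cast; ring
  -- Step 2 : G' ≤ G
  have h2 : G' ≤ G := by
    have e1 : G' = ∑ x ∈ Finset.univ.filter (fun x : Fin (k'+2) => L ≤ x.1), g x.1 :=
      (Finset.sum_subtype _ (by simp) (fun x : Fin (k'+2) => g x.1)).symm
    have e2 : ∑ x ∈ Finset.univ.filter (fun x : Fin (k'+2) => L ≤ x.1), g x.1
        ≤ ∑ x : Fin (k'+2), g x.1 :=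
      Finset.sum_le_sum_of_subset_of_nonneg (Finset.filter_subset _ _)
        (fun x _ _ => hgnn x.1)
    have e3 : ∑ x : Fin (k'+2), g x.1 = ∑ j ∈ Finset.range (k'+2), g j :=
      Fin.sum_univ_eq_sum_range _ _
    have e4 : G = ∑ j ∈ Finset.range (n+1), g j := Fin.sum_univ_eq_sum_range _ _
    have e5 : ∑ j ∈ Finset.range (k'+2), g j ≤ ∑ j ∈ Finset.range (max (k'+2) (n+1)), g j :=
      Finset.sum_le_sum_of_subset_of_nonneg
        (Finset.range_subset_range.2 (le_max_left _ _)) (fun j _ _ => hgnn j)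
    have e6 : ∑ j ∈ Finset.range (max (k'+2) (n+1)), g j = ∑ j ∈ Finset.range (n+1), g j := by
      symm
      apply Finset.sum_subset (Finset.range_subset_range.2 (le_max_right _ _))
      intro j hj hnj
      rw [Finset.mem_range] at hj hnj
      have hjn : n + 1 ≤ j := by omega
      have : VW w n (k' + j) = 0 := VW_eq_zero w (by omega)
      rw [hg]
      simp [this]
    rw [e1, e4]
    calc _ ≤ ∑ x : Fin (k'+2), g x.1 := e2
      _ = ∑ j ∈ Finset.range (k'+2), g j := e3
      _ ≤ ∑ j ∈ Finset.range (max (k'+2) (n+1)), g j := e5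
      _ = ∑ j ∈ Finset.range (n+1), g j := e6
  -- Step 3 : (n+1) * G = (n - k') * V
  have h3 : ((n:ℝ)+1) * G = ((n:ℝ) - k') * V := by
    have hkw := key_words w n k'
    push_cast at hkw
    rw [hG, hV]
    convert hkw using 2 <;> push_cast <;> ring
  -- Step 4 : core at (n+1, k'+1)
  have h5 : ((n:ℝ)+1) * B = ((k':ℝ)+1) * V := by
    have hc := core w (n+1) (k'+1)
    push_cast at hc
    rw [hB, hV]
    convert hc using 2 <;> push_cast <;> ring
  -- assemble
  have hVnn : 0 ≤ V := VW_nonneg w hw _ _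
  have hn1 : (0:ℝ) < n := by exact_mod_cast hn
  have key : ((n:ℝ)+1) * (n:ℝ) * ((L:ℝ) * A) ≤ ((n:ℝ)+1) * (n:ℝ) * (2 * B) := by
    have c1 : ((n:ℝ)+1) * ((L:ℝ) * ((n:ℝ) * A)) ≤ ((n:ℝ)+1) * (2 * ((k':ℝ)+1) * G) := by
      apply mul_le_mul_of_nonneg_left _ (by positivity)
      exact h1.trans (by nlinarith [h2])
    have c2 : ((n:ℝ)+1) * (2 * ((k':ℝ)+1) * G) = 2 * ((k':ℝ)+1) * (((n:ℝ) - k') * V) := by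
      rw [← h3]; ring
    have c3 : 2 * ((k':ℝ)+1) * (((n:ℝ) - k') * V) ≤ 2 * ((k':ℝ)+1) * ((n:ℝ) * V) := by
      apply mul_le_mul_of_nonneg_left _ (by positivity)
      nlinarith [hVnn]
    have c4 : 2 * ((k':ℝ)+1) * ((n:ℝ) * V) = 2 * (n:ℝ) * (((k':ℝ)+1) * V) := by ring
    have c5 : 2 * (n:ℝ) * (((k':ℝ)+1) * V) = ((n:ℝ)+1) * (n:ℝ) * (2 * B) := by
      rw [← h5]; ring
    calc ((n:ℝ)+1) * (n:ℝ) * ((L:ℝ) * A) = ((n:ℝ)+1) * ((L:ℝ) * ((n:ℝ) * A)) := by ring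
      _ ≤ ((n:ℝ)+1) * (2 * ((k':ℝ)+1) * G) := c1
      _ = 2 * ((k':ℝ)+1) * (((n:ℝ) - k') * V) := c2
      _ ≤ 2 * ((k':ℝ)+1) * ((n:ℝ) * V) := c3
      _ = 2 * (n:ℝ) * (((k':ℝ)+1) * V) := c4
      _ = ((n:ℝ)+1) * (n:ℝ) * (2 * B) := c5
  have hLA : (L:ℝ) * A ≤ 2 * B :=
    le_of_mul_le_mul_left key (by positivity)
  rw [div_mul_eq_mul_div, le_div_iff₀ hL0]
  linarith [hLA]

end SGT


/-- Lemma: for `L ≥ 1`, `k ≥ L` and `N > 1`,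
`ν_N(L+1 ≤ σ(s₁) ≤ k+1 | σ(s) = k+1) ≤ 2/L`, where `s₁` is the first child of `s`
and conditional probability is the quotient `ν_N(A ∩ B)/ν_N(B)`. -/
theorem stmt_17 (w : ℕ → ℝ) (hw : ∀ n, 1 ≤ n → 0 ≤ w n) (h1 : 0 < w 1)
    (h2 : ∃ n, 2 < n ∧ 0 < w n)
    (hratio : Tendsto (fun n => w (n + 1) / w n) atTop atTop)
    (N L k : ℕ) (hN : 1 < N) (hL : 1 ≤ L) (hk : L ≤ k) :
    nu w N (fun t => t.children.length = k ∧
        L + 1 ≤ t.firstChildOutdeg + 1 ∧ t.firstChildOutdeg + 1 ≤ k + 1) /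
      nu w N (fun t => t.children.length = k) ≤ 2 / (L : ℝ) := by
  obtain ⟨n, rfl⟩ : ∃ n, N = n + 2 := ⟨N - 2, by omega⟩
  obtain ⟨k', rfl⟩ : ∃ k', k = k' + 1 := ⟨k - 1, by omega⟩
  have hL0 : (0:ℝ) < L := by exact_mod_cast hL
  rw [nu, nu]
  have hnumA : (∑' t : {t : PTree // t.size = n+2 ∧ (t.children.length = k'+1 ∧
        L + 1 ≤ t.firstChildOutdeg + 1 ∧ t.firstChildOutdeg + 1 ≤ (k'+1) + 1)}, t.1.weight w)
      = w ((k'+1)+1) * ∑ ℓ : SGT.Sidx k' L, w (ℓ.1.1 + 1) * SGT.ZF w n (k' + ℓ.1.1) :=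
    SGT.tsum_eventA w n k' L
  have hnumB : (∑' t : {t : PTree // t.size = n+2 ∧ t.children.length = k'+1}, t.1.weight w)
      = w ((k'+1)+1) * SGT.ZF w (n+1) (k'+1) :=
    SGT.tsum_eventB w (n+1) (k'+1)
  rw [hnumA, hnumB]
  rw [div_div_div_comm]
  rcases eq_or_ne (Zfun w (n+2)) 0 with hZ | hZ
  · rw [hZ]
    simp only [div_zero]
    positivity
  · rw [div_self hZ, div_one]
    set SA := ∑ ℓ : SGT.Sidx k' L, w (ℓ.1.1 + 1) * SGT.ZF w n (k' + ℓ.1.1) with hSA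
    set Bz := SGT.ZF w (n+1) (k'+1) with hBz
    have hineq : SA ≤ (2 / L) * Bz := SGT.main_ineq w hw n k' L hL (by omega)
    have hSL : SA * L ≤ 2 * Bz := by
      have hm := mul_le_mul_of_nonneg_right hineq (le_of_lt hL0)
      have he : (2 / (L:ℝ)) * Bz * L = 2 * Bz := by field_simp
      linarith [he ▸ hm]
    have hwK : 0 ≤ w ((k'+1)+1) := hw _ (by omega)
    rcases eq_or_ne (w ((k'+1)+1) * Bz) 0 with hden | hden
    · rw [hden, div_zero]
      positivity
    · have hBnn : 0 ≤ Bz := SGT.ZF_nonneg w hw _ _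
      have hdpos : 0 < w ((k'+1)+1) * Bz := by
        rcases lt_or_eq_of_le (mul_nonneg hwK hBnn) with h | h
        · exact h
        · exact absurd h.symm hden
      rw [div_le_div_iff₀ hdpos hL0]
      have hwKpos : 0 < w ((k'+1)+1) := by
        rcases lt_or_eq_of_le hwK with h | h
        · exact h
        · exfalso; apply hden; rw [← h, zero_mul]
      calc w ((k'+1)+1) * SA * L = w ((k'+1)+1) * (SA * L) := by ring
        _ ≤ w ((k'+1)+1) * (2 * Bz) := mul_le_mul_of_nonneg_left hSL hwK
        _ = 2 * (w ((k'+1)+1) * Bz) := by ring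
end
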